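/- Let Σ_1, Σ_2 be r×r positive definite matrices and let d_1,…,d_r be the eigenvalues of Σ_2^{1/2} Σ_1^{-1} Σ_2^{1/2}. Then: (i) ρ_max(Σ_2)^{-2} ‖Σ_1 − Σ_2‖_F² ≤ Σ_{k=1}^r (d_k^{-1} − 1)² ≤ ρ_min(Σ_2)^{-2} ‖Σ_1 − Σ_2‖_F²; and (ii) for every ε > 0 there exists δ > 0, not depending on r, Σ_1, Σ_2, such that g²(Σ_1,Σ_2) < δ implies max_{1≤k≤r} |d_k − 1| < ε. -/

import Mathlib

open Matrix
open scoped BigOperators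

noncomputable section

open scoped MatrixOrder Matrix.Norms.L2Operator

/-- squared Frobenius norm -/
def frobSq {r : ℕ} (A : Matrix (Fin r) (Fin r) ℝ) : ℝ := ∑ i, ∑ j, A i j ^ 2

/-- the set of eigenvalues of a matrix -/
def eigSet {r : ℕ} (A : Matrix (Fin r) (Fin r) ℝ) : Set ℝ :=
  {μ | ∃ v : Fin r → ℝ, v ≠ 0 ∧ A *ᵥ v = μ • v}

/-- smallest eigenvalue -/
def rhoMin {r : ℕ} (A : Matrix (Fin r) (Fin r) ℝ) : ℝ := sInf (eigSet A)

/-- largest eigenvalue -/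
def rhoMax {r : ℕ} (A : Matrix (Fin r) (Fin r) ℝ) : ℝ := sSup (eigSet A)

/-- `g²(Σ₁,Σ₂) = 1 − det(Σ₁)^{1/4} det(Σ₂)^{1/4} / det((Σ₁+Σ₂)/2)^{1/2}` -/
def gsq {r : ℕ} (S1 S2 : Matrix (Fin r) (Fin r) ℝ) : ℝ :=
  1 - S1.det ^ ((1 : ℝ) / 4) * S2.det ^ ((1 : ℝ) / 4) /
    (((1 : ℝ) / 2) • (S1 + S2)).det ^ ((1 : ℝ) / 2)

/-!
Put `Q = Σ₂^{1/2}` and `M = Q Σ₁⁻¹ Q`. The functional calculus of `M` gives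
`a Σ₁ + b Σ₂ = Q f(M) Q` for `f(x) = a x⁻¹ + b`, so everything is read off the eigenvalues `d_k`
of `M`. With `(a, b) = (1, -1)`, `Σ₁ - Σ₂ = Q (M⁻¹ - 1) Q`; since `‖Q X Q‖_F²` lies between
`ρ_min(Σ₂)² ‖X‖_F²` and `ρ_max(Σ₂)² ‖X‖_F²` and `‖M⁻¹ - 1‖_F² = ∑ (d_k⁻¹ - 1)²`, this is (i).
Taking determinants instead, `(1 - g²)⁴ = ∏ 4 d_k / (1 + d_k)²`, a product of factors in `(0, 1]`.
So `g² < δ` pushes every factor above `1 - 4δ`, and `1 - 4d / (1 + d)² = (d - 1)² / (1 + d)²`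
then gives `(d_k - 1)² < 64 δ` uniformly in `r`, `Σ₁`, `Σ₂`.
-/

namespace Matrix.IsHermitian

variable {n : Type*} [Fintype n] [DecidableEq n] {A : Matrix n n ℝ}

lemma det_cfc (hA : A.IsHermitian) (f : ℝ → ℝ) :
    (cfc f A).det = ∏ i, f (hA.eigenvalues i) := by
  simp [hA.cfc_eq, IsHermitian.cfc, -Unitary.conjStarAlgAut_apply]

lemma trace_cfc (hA : A.IsHermitian) (f : ℝ → ℝ) :
    (cfc f A).trace = ∑ i, f (hA.eigenvalues i) := by
  rw [hA.cfc_eq, IsHermitian.cfc, Unitary.conjStarAlgAut_apply, trace_mul_cycle,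
    Unitary.coe_star_mul_self, one_mul, trace_diagonal]
  simp

lemma cfc_mul_inv_add (hA : A.IsHermitian) (hAu : IsUnit A) (a b : ℝ) :
    cfc (fun x => a * x⁻¹ + b) A = a • A⁻¹ + b • 1 := by
  have hc (f : ℝ → ℝ) : ContinuousOn f (spectrum ℝ A) := A.finite_real_spectrum.continuousOn f
  rw [cfc_add A (fun x => a * x⁻¹) (fun _ => b) (hc _) (hc _), cfc_const_mul _ _ _ (hc _),
    cfc_const b A, cfc_ringInverse_id A hAu, ← nonsing_inv_eq_ringInverse,
    Algebra.algebraMap_eq_smul_one]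

end Matrix.IsHermitian

section SqrtConjugate

variable {n : Type*} [Fintype n] [DecidableEq n] {S1 S2 : Matrix n n ℝ}

lemma transpose_cfc (f : ℝ → ℝ) (A : Matrix n n ℝ) : (cfc f A)ᵀ = cfc f A := by
  simpa [star_eq_conjTranspose, conjTranspose_eq_transpose_of_trivial] using
    (cfc_predicate f A).star_eq

lemma transpose_sqrt (S : Matrix n n ℝ) : (CFC.sqrt S)ᵀ = CFC.sqrt S := by
  simpa [conjTranspose_eq_transpose_of_trivial] using
    (nonneg_iff_posSemidef.mp (CFC.sqrt_nonneg S)).1.eq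

lemma det_sqrt_mul_det_sqrt (h2 : S2.PosDef) :
    (CFC.sqrt S2).det * (CFC.sqrt S2).det = S2.det := by
  rw [← det_mul, CFC.sqrt_mul_sqrt_self S2 h2.posSemidef.nonneg]

lemma isUnit_det_sqrt (h2 : S2.PosDef) : IsUnit (CFC.sqrt S2).det :=
  isUnit_iff_ne_zero.mpr fun h0 => h2.det_pos.ne' (by rw [← det_sqrt_mul_det_sqrt h2, h0, zero_mul])

lemma posDef_sqrt_mul_inv_mul_sqrt (h1 : S1.PosDef) (h2 : S2.PosDef) :
    (CFC.sqrt S2 * S1⁻¹ * CFC.sqrt S2).PosDef := by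
  have hinj : Function.Injective (CFC.sqrt S2).mulVec :=
    mulVec_injective_iff_isUnit.mpr ((isUnit_iff_isUnit_det _).mpr (isUnit_det_sqrt h2))
  have := h1.inv.conjTranspose_mul_mul_same hinj
  rwa [conjTranspose_eq_transpose_of_trivial, transpose_sqrt] at this

lemma isUnit_sqrt_mul_inv_mul_sqrt (h1 : IsUnit S1.det) (h2 : S2.PosDef) :
    IsUnit (CFC.sqrt S2 * S1⁻¹ * CFC.sqrt S2) := by
  have hQ := isUnit_det_sqrt h2
  simp only [isUnit_iff_isUnit_det, det_mul]
  exact (hQ.mul (isUnit_nonsing_inv_det S1 h1)).mul hQ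

lemma sqrt_mul_inv_mul_sqrt_inv (h1 : IsUnit S1.det) (h2 : S2.PosDef) :
    CFC.sqrt S2 * (CFC.sqrt S2 * S1⁻¹ * CFC.sqrt S2)⁻¹ * CFC.sqrt S2 = S1 := by
  have hQ := isUnit_det_sqrt h2
  rw [Matrix.mul_inv_rev, Matrix.mul_inv_rev, nonsing_inv_nonsing_inv S1 h1]
  simp only [Matrix.mul_assoc, mul_nonsing_inv_cancel_left _ _ hQ, nonsing_inv_mul _ hQ,
    Matrix.mul_one]

lemma sqrt_mul_cfc_mul_sqrt (h1 : IsUnit S1.det) (h2 : S2.PosDef)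
    (hM : (CFC.sqrt S2 * S1⁻¹ * CFC.sqrt S2).IsHermitian) (a b : ℝ) :
    CFC.sqrt S2 * cfc (fun x => a * x⁻¹ + b) (CFC.sqrt S2 * S1⁻¹ * CFC.sqrt S2) * CFC.sqrt S2 =
      a • S1 + b • S2 := by
  rw [hM.cfc_mul_inv_add (isUnit_sqrt_mul_inv_mul_sqrt h1 h2)]
  simp only [Matrix.mul_add, Matrix.add_mul, Matrix.mul_smul, Matrix.smul_mul, Matrix.mul_one,
    sqrt_mul_inv_mul_sqrt_inv h1 h2, CFC.sqrt_mul_sqrt_self S2 h2.posSemidef.nonneg]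

lemma det_smul_add_smul (h1 : IsUnit S1.det) (h2 : S2.PosDef)
    (hM : (CFC.sqrt S2 * S1⁻¹ * CFC.sqrt S2).IsHermitian) (a b : ℝ) :
    (a • S1 + b • S2).det = S2.det * ∏ i, (a * (hM.eigenvalues i)⁻¹ + b) := by
  rw [← sqrt_mul_cfc_mul_sqrt h1 h2 hM, det_mul, det_mul, hM.det_cfc,
    ← det_sqrt_mul_det_sqrt h2]
  ring

lemma sub_eq_sqrt_mul_cfc_mul_sqrt (h1 : IsUnit S1.det) (h2 : S2.PosDef)
    (hM : (CFC.sqrt S2 * S1⁻¹ * CFC.sqrt S2).IsHermitian) :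
    S1 - S2 = CFC.sqrt S2 * cfc (fun x : ℝ => x⁻¹ - 1) (CFC.sqrt S2 * S1⁻¹ * CFC.sqrt S2) *
      CFC.sqrt S2 := by
  simpa only [one_mul, one_smul, neg_one_smul, ← sub_eq_add_neg] using
    (sqrt_mul_cfc_mul_sqrt h1 h2 hM 1 (-1)).symm

end SqrtConjugate

lemma eigSet_eq_spectrum {r : ℕ} (A : Matrix (Fin r) (Fin r) ℝ) : eigSet A = spectrum ℝ A := by
  ext μ
  rw [spectrum.mem_iff, isUnit_iff_isUnit_det, isUnit_iff_ne_zero, not_not,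
    ← exists_mulVec_eq_zero_iff]
  simp [eigSet, sub_mulVec, Algebra.algebraMap_eq_smul_one, smul_mulVec, sub_eq_zero, eq_comm]

section Spectrum

variable {r : ℕ} {A : Matrix (Fin r) (Fin r) ℝ}

lemma rhoMin_smul_one_le (hA : A.IsHermitian) : rhoMin A • (1 : Matrix (Fin r) (Fin r) ℝ) ≤ A := by
  rw [← Algebra.algebraMap_eq_smul_one]
  refine algebraMap_le_of_le_spectrum (fun x hx => ?_) hA
  rw [rhoMin, eigSet_eq_spectrum]
  exact csInf_le A.finite_real_spectrum.bddBelow hx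

lemma le_rhoMax_smul_one (hA : A.IsHermitian) : A ≤ rhoMax A • (1 : Matrix (Fin r) (Fin r) ℝ) := by
  rw [← Algebra.algebraMap_eq_smul_one]
  refine le_algebraMap_of_spectrum_le (fun x hx => ?_) hA
  rw [rhoMax, eigSet_eq_spectrum]
  exact le_csSup A.finite_real_spectrum.bddAbove hx

lemma eigSet_nonneg (hA : A.PosSemidef) : ∀ x ∈ eigSet A, 0 ≤ x := by
  rw [eigSet_eq_spectrum, hA.1.spectrum_real_eq_range_eigenvalues]
  rintro - ⟨i, rfl⟩
  exact hA.eigenvalues_nonneg i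

lemma rhoMin_nonneg (hA : A.PosSemidef) : 0 ≤ rhoMin A :=
  Real.sInf_nonneg (eigSet_nonneg hA)

lemma rhoMax_nonneg (hA : A.PosSemidef) : 0 ≤ rhoMax A :=
  Real.sSup_nonneg (eigSet_nonneg hA)

lemma rhoMin_pos [Nonempty (Fin r)] (hA : A.PosDef) : 0 < rhoMin A := by
  rw [rhoMin, eigSet_eq_spectrum, hA.1.spectrum_real_eq_range_eigenvalues]
  obtain ⟨i, hi⟩ := (Set.range_nonempty hA.1.eigenvalues).csInf_mem (Set.finite_range _)
  exact hi ▸ hA.eigenvalues_pos i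

end Spectrum

section Frobenius

variable {r : ℕ}

lemma frobSq_eq_trace (A : Matrix (Fin r) (Fin r) ℝ) : frobSq A = (Aᵀ * A).trace := by
  simp only [frobSq, trace, diag_apply, mul_apply, transpose_apply, sq]
  exact Finset.sum_comm

lemma frobSq_transpose (A : Matrix (Fin r) (Fin r) ℝ) : frobSq Aᵀ = frobSq A := by
  simp only [frobSq, transpose_apply]
  exact Finset.sum_comm

lemma frobSq_cfc {A : Matrix (Fin r) (Fin r) ℝ} (hA : A.IsHermitian) (f : ℝ → ℝ) :
    frobSq (cfc f A) = ∑ i, f (hA.eigenvalues i) ^ 2 := by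
  have hf : ContinuousOn f (spectrum ℝ A) := A.finite_real_spectrum.continuousOn f
  rw [frobSq_eq_trace, transpose_cfc, ← cfc_mul .., hA.trace_cfc]
  simp only [sq]

lemma frobSq_mul_eq_trace (A Y : Matrix (Fin r) (Fin r) ℝ) :
    frobSq (A * Y) = (Yᵀ * (Aᵀ * A) * Y).trace := by
  simp only [frobSq_eq_trace, transpose_mul, Matrix.mul_assoc]

lemma trace_transpose_mul_mul_mono {S T : Matrix (Fin r) (Fin r) ℝ} (h : S ≤ T)
    (Y : Matrix (Fin r) (Fin r) ℝ) : (Yᵀ * S * Y).trace ≤ (Yᵀ * T * Y).trace := by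
  have := (le_iff.mp (star_left_conjugate_le_conjugate h Y)).trace_nonneg
  rw [star_eq_conjTranspose, conjTranspose_eq_transpose_of_trivial, trace_sub] at this
  linarith

lemma trace_transpose_mul_smul_one_mul (c : ℝ) (Y : Matrix (Fin r) (Fin r) ℝ) :
    (Yᵀ * (c • 1) * Y).trace = c * frobSq Y := by
  simp [frobSq_eq_trace, trace_smul]

lemma posSemidef_transpose_mul_self (A : Matrix (Fin r) (Fin r) ℝ) : (Aᵀ * A).PosSemidef := by
  simpa [conjTranspose_eq_transpose_of_trivial] using posSemidef_conjTranspose_mul_self A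

lemma rhoMin_mul_frobSq_le_frobSq_mul (A Y : Matrix (Fin r) (Fin r) ℝ) :
    rhoMin (Aᵀ * A) * frobSq Y ≤ frobSq (A * Y) := by
  rw [frobSq_mul_eq_trace, ← trace_transpose_mul_smul_one_mul]
  exact trace_transpose_mul_mul_mono (rhoMin_smul_one_le (posSemidef_transpose_mul_self A).1) Y

lemma frobSq_mul_le_rhoMax_mul_frobSq (A Y : Matrix (Fin r) (Fin r) ℝ) :
    frobSq (A * Y) ≤ rhoMax (Aᵀ * A) * frobSq Y := by
  rw [frobSq_mul_eq_trace, ← trace_transpose_mul_smul_one_mul]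
  exact trace_transpose_mul_mul_mono (le_rhoMax_smul_one (posSemidef_transpose_mul_self A).1) Y

variable {Q N : Matrix (Fin r) (Fin r) ℝ}

lemma rhoMin_sq_mul_frobSq_le (hQ : Qᵀ = Q) (hN : Nᵀ = N) :
    rhoMin (Q * Q) ^ 2 * frobSq N ≤ frobSq (Q * N * Q) := by
  have hS : Qᵀ * Q = Q * Q := by rw [hQ]
  have hρ : 0 ≤ rhoMin (Q * Q) := hS ▸ rhoMin_nonneg (posSemidef_transpose_mul_self Q)
  calc rhoMin (Q * Q) ^ 2 * frobSq N = rhoMin (Q * Q) * (rhoMin (Q * Q) * frobSq N) := by ring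
    _ ≤ rhoMin (Q * Q) * frobSq (Q * N) := by
      gcongr
      simpa only [hS] using rhoMin_mul_frobSq_le_frobSq_mul Q N
    _ = rhoMin (Q * Q) * frobSq (N * Q) := by
      rw [← frobSq_transpose (N * Q), transpose_mul, hN, hQ]
    _ ≤ frobSq (Q * N * Q) := by
      simpa only [hS, Matrix.mul_assoc] using rhoMin_mul_frobSq_le_frobSq_mul Q (N * Q)

lemma frobSq_le_rhoMax_sq_mul (hQ : Qᵀ = Q) (hN : Nᵀ = N) :
    frobSq (Q * N * Q) ≤ rhoMax (Q * Q) ^ 2 * frobSq N := by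
  have hS : Qᵀ * Q = Q * Q := by rw [hQ]
  have hρ : 0 ≤ rhoMax (Q * Q) := hS ▸ rhoMax_nonneg (posSemidef_transpose_mul_self Q)
  calc frobSq (Q * N * Q) ≤ rhoMax (Q * Q) * frobSq (N * Q) := by
        simpa only [hS, Matrix.mul_assoc] using frobSq_mul_le_rhoMax_mul_frobSq Q (N * Q)
    _ = rhoMax (Q * Q) * frobSq (Q * N) := by
      rw [← frobSq_transpose (N * Q), transpose_mul, hN, hQ]
    _ ≤ rhoMax (Q * Q) * (rhoMax (Q * Q) * frobSq N) := by
      gcongr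
      simpa only [hS] using frobSq_mul_le_rhoMax_mul_frobSq Q N
    _ = rhoMax (Q * Q) ^ 2 * frobSq N := by ring

end Frobenius

section Comparison

variable {r : ℕ} {S1 S2 : Matrix (Fin r) (Fin r) ℝ}

lemma frobSq_sub_le_rhoMax_sq_mul (h1 : S1.PosDef) (h2 : S2.PosDef)
    (hM : (CFC.sqrt S2 * S1⁻¹ * CFC.sqrt S2).IsHermitian) :
    frobSq (S1 - S2) ≤ rhoMax S2 ^ 2 * ∑ k, ((hM.eigenvalues k)⁻¹ - 1) ^ 2 := by
  rw [← frobSq_cfc hM (fun x => x⁻¹ - 1), sub_eq_sqrt_mul_cfc_mul_sqrt h1.det_pos.ne'.isUnit h2 hM]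
  simpa only [CFC.sqrt_mul_sqrt_self S2 h2.posSemidef.nonneg] using
    frobSq_le_rhoMax_sq_mul (transpose_sqrt S2) (transpose_cfc _ _)

lemma rhoMin_sq_mul_le_frobSq_sub (h1 : S1.PosDef) (h2 : S2.PosDef)
    (hM : (CFC.sqrt S2 * S1⁻¹ * CFC.sqrt S2).IsHermitian) :
    rhoMin S2 ^ 2 * ∑ k, ((hM.eigenvalues k)⁻¹ - 1) ^ 2 ≤ frobSq (S1 - S2) := by
  rw [← frobSq_cfc hM (fun x => x⁻¹ - 1), sub_eq_sqrt_mul_cfc_mul_sqrt h1.det_pos.ne'.isUnit h2 hM]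
  simpa only [CFC.sqrt_mul_sqrt_self S2 h2.posSemidef.nonneg] using
    rhoMin_sq_mul_frobSq_le (transpose_sqrt S2) (transpose_cfc _ _)

lemma one_sub_gsq_pow_four (h1 : S1.PosSemidef) (h2 : S2.PosSemidef) :
    (1 - gsq S1 S2) ^ 4 = S1.det * S2.det / (((1 : ℝ) / 2) • (S1 + S2)).det ^ 2 := by
  have hm : 0 ≤ (((1 : ℝ) / 2) • (S1 + S2)).det := ((h1.add h2).smul (by norm_num)).det_nonneg
  have hq {p : ℝ} (hp : 0 ≤ p) : (p ^ ((1 : ℝ) / 4)) ^ 4 = p := by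
    rw [← Real.rpow_natCast, ← Real.rpow_mul hp]; norm_num
  have hh {p : ℝ} (hp : 0 ≤ p) : (p ^ ((1 : ℝ) / 2)) ^ 4 = p ^ 2 := by
    rw [← Real.rpow_natCast, ← Real.rpow_mul hp]; norm_num
  rw [gsq, sub_sub_cancel, div_pow, mul_pow, hq h1.det_nonneg, hq h2.det_nonneg, hh hm]

lemma one_sub_gsq_pow_four_eq_prod (h1 : S1.PosDef) (h2 : S2.PosDef)
    (hM : (CFC.sqrt S2 * S1⁻¹ * CFC.sqrt S2).IsHermitian) :
    (1 - gsq S1 S2) ^ 4 = ∏ i, 4 * hM.eigenvalues i / (1 + hM.eigenvalues i) ^ 2 := by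
  have hdet1 := det_smul_add_smul h1.det_pos.ne'.isUnit h2 hM 1 0
  have hdetm := det_smul_add_smul h1.det_pos.ne'.isUnit h2 hM (1 / 2) (1 / 2)
  rw [one_smul, zero_smul, add_zero] at hdet1
  rw [← smul_add] at hdetm
  have hd := (posDef_sqrt_mul_inv_mul_sqrt h1 h2).eigenvalues_pos
  rw [one_sub_gsq_pow_four h1.posSemidef h2.posSemidef, hdet1, hdetm, mul_pow, ← Finset.prod_pow,
    mul_right_comm, sq S2.det, mul_div_mul_left _ _ (mul_ne_zero h2.det_pos.ne' h2.det_pos.ne'),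
    ← Finset.prod_div_distrib]
  refine Finset.prod_congr rfl fun i _ => ?_
  have := hd i
  field_simp
  ring

end Comparison

lemma four_mul_div_one_add_sq_le_one (x : ℝ) : 4 * x / (1 + x) ^ 2 ≤ 1 :=
  div_le_one_of_le₀ (by nlinarith [sq_nonneg (x - 1)]) (sq_nonneg _)

lemma sq_sub_one_lt_of_one_sub_lt {x η : ℝ} (hx : 0 < x) (hη : η ≤ 1 / 4)
    (h : 1 - η < 4 * x / (1 + x) ^ 2) : (x - 1) ^ 2 < 16 * η := by
  rw [lt_div_iff₀ (by positivity)] at h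
  have hx3 : x < 3 := by nlinarith
  nlinarith

lemma sq_eigenvalues_sub_one_lt {r : ℕ} {T1 T2 : Matrix (Fin r) (Fin r) ℝ} (h1 : T1.PosDef)
    (h2 : T2.PosDef) (hM : (CFC.sqrt T2 * T1⁻¹ * CFC.sqrt T2).IsHermitian) {δ : ℝ}
    (hδ : δ ≤ 1 / 16) (hg : gsq T1 T2 < δ) (k : Fin r) :
    (hM.eigenvalues k - 1) ^ 2 < 64 * δ := by
  have hd := (posDef_sqrt_mul_inv_mul_sqrt h1 h2).eigenvalues_pos
  have hbernoulli := one_add_mul_le_pow (a := -δ) (by linarith) 4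
  have hb : 1 - 4 * δ < 4 * hM.eigenvalues k / (1 + hM.eigenvalues k) ^ 2 :=
    calc 1 - 4 * δ ≤ (1 - δ) ^ 4 := by simpa [← sub_eq_add_neg] using hbernoulli
      _ < (1 - gsq T1 T2) ^ 4 := pow_lt_pow_left₀ (by linarith) (by linarith) four_ne_zero
      _ = ∏ i, 4 * hM.eigenvalues i / (1 + hM.eigenvalues i) ^ 2 :=
        one_sub_gsq_pow_four_eq_prod h1 h2 hM
      _ ≤ 4 * hM.eigenvalues k / (1 + hM.eigenvalues k) ^ 2 := by
        simpa using Finset.prod_le_prod_of_subset_of_le_one (Finset.subset_univ {k})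
          (fun i _ => (by have := hd i; positivity))
          (fun i _ _ => four_mul_div_one_add_sq_le_one _)
  linarith [sq_sub_one_lt_of_one_sub_lt (hd k) (by linarith) hb]

/-- **Eigenvalue comparison lemma**: for positive definite `Σ₁, Σ₂` with
`d₁,…,d_r` the eigenvalues of `Σ₂^{1/2} Σ₁⁻¹ Σ₂^{1/2}`:
(i) `ρ_max(Σ₂)⁻² ‖Σ₁−Σ₂‖_F² ≤ ∑ₖ (dₖ⁻¹−1)² ≤ ρ_min(Σ₂)⁻² ‖Σ₁−Σ₂‖_F²`;
(ii) for every `ε > 0` there is `δ > 0`, independent of `r, Σ₁, Σ₂`, such that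
`g²(Σ₁,Σ₂) < δ` forces `max_k |dₖ − 1| < ε`. -/
theorem eigenvalue_comparison (r : ℕ) (S1 S2 : Matrix (Fin r) (Fin r) ℝ)
    (h1 : S1.PosDef) (h2 : S2.PosDef)
    (hM : (CFC.sqrt S2 * S1⁻¹ * CFC.sqrt S2).IsHermitian) :
    (frobSq (S1 - S2) / rhoMax S2 ^ 2 ≤ ∑ k, ((hM.eigenvalues k)⁻¹ - 1) ^ 2 ∧
      ∑ k, ((hM.eigenvalues k)⁻¹ - 1) ^ 2 ≤ frobSq (S1 - S2) / rhoMin S2 ^ 2) ∧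
    ∀ ε > 0, ∃ δ > 0, ∀ (r' : ℕ) (T1 T2 : Matrix (Fin r') (Fin r') ℝ)
      (g1 : T1.PosDef) (g2 : T2.PosDef)
      (hM' : (CFC.sqrt T2 * T1⁻¹ * CFC.sqrt T2).IsHermitian),
      gsq T1 T2 < δ → ∀ k, |hM'.eigenvalues k - 1| < ε := by
  refine ⟨⟨?_, ?_⟩, fun ε hε => ⟨min (1 / 16) (ε ^ 2 / 64), by positivity, ?_⟩⟩
  · exact div_le_of_le_mul₀ (sq_nonneg _) (Finset.sum_nonneg fun _ _ => sq_nonneg _)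
      (mul_comm (rhoMax S2 ^ 2) _ ▸ frobSq_sub_le_rhoMax_sq_mul h1 h2 hM)
  · rcases isEmpty_or_nonempty (Fin r) with hr | hr
    · simp [frobSq]
    · rw [le_div_iff₀ (pow_pos (rhoMin_pos h2) 2), mul_comm]
      exact rhoMin_sq_mul_le_frobSq_sub h1 h2 hM
  · intro r' T1 T2 g1 g2 hM' hg k
    have h := sq_eigenvalues_sub_one_lt g1 g2 hM' (min_le_left _ _) hg k
    refine abs_lt_of_sq_lt_sq (h.trans_le ?_) hε.le
    linarith [min_le_right (1 / 16 : ℝ) (ε ^ 2 / 64)]
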